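/- arXiv:1911.00668 — 2 statements merged into one kernel-verified Lean document; each statement's English description precedes it below -/
import Mathlib

section
/- With P(l) as above (probabilities of the 2^m packet-arrival patterns) and N(l) the associated diagonal 0-1 matrices, and R ∈ ℝ^{m×m} symmetric positive definite, the averaged matrix L = Σ_{l=0}^{2^m−1} P(l) · N(l) R N(l) is positive definite provided pʰ > 0 for all h ∈ {1,...,m}. -/
open Matrix

/-
Every term `P l • N l R N l` is positive semidefinite, since `P l ≥ 0` and `N l` is a real
diagonal (hence symmetric) matrix. The pattern `l = 2 ^ m - 1` in which every packet arrives has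
`N l = 1` and `P l = ∏ h, p h > 0`, so its term `P l • R` is positive definite, and a positive
definite matrix plus positive semidefinite ones stays positive definite.
-/

theorem Matrix.PosDef.sum_of_posSemidef {n ι R : Type*} [Fintype n] [Ring R] [PartialOrder R]
    [StarRing R] [AddLeftMono R] [DecidableEq ι] {A : ι → Matrix n n R} {s : Finset ι} {i : ι}
    (hi : i ∈ s) (hAi : (A i).PosDef) (hA : ∀ j ∈ s, (A j).PosSemidef) :
    (∑ j ∈ s, A j).PosDef := by
  rw [← Finset.add_sum_erase s A hi]
  exact hAi.add_posSemidef <|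
    posSemidef_sum _ fun j hj => hA j (Finset.mem_of_mem_erase hj)

theorem Matrix.PosSemidef.diagonal_mul_mul_diagonal_same {n R : Type*} [Fintype n]
    [DecidableEq n] [CommRing R] [PartialOrder R] [StarRing R] [StarOrderedRing R]
    {A : Matrix n n R} (hA : A.PosSemidef) {d : n → R} (hd : star d = d) :
    (diagonal d * A * diagonal d).PosSemidef := by
  simpa only [diagonal_conjTranspose, hd] using hA.mul_mul_conjTranspose_same (diagonal d)

theorem prod_ite_sub_nonneg {ι : Type*} [Fintype ι] {p : ι → ℝ} (hp0 : ∀ h, 0 ≤ p h)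
    (hp1 : ∀ h, p h ≤ 1) (b : ι → Bool) :
    0 ≤ ∏ h, if b h then p h else 1 - p h :=
  Finset.prod_nonneg fun h _ => by
    split
    · exact hp0 h
    · linarith [hp1 h]

theorem Nat.testBit_two_pow_sub_one_of_lt {m i : ℕ} (hi : i < m) :
    (2 ^ m - 1).testBit i = true := by
  simp [Nat.testBit_two_pow_sub_one, hi]

/-- The packet-arrival-averaged control weighting matrix is positive definite when
every channel has positive arrival probability. -/
theorem averaged_weighting_posdef (m : ℕ) (p : Fin m → ℝ)
    (hp0 : ∀ h, 0 < p h) (hp1 : ∀ h, p h ≤ 1)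
    (P : Fin (2 ^ m) → ℝ)
    (hP : ∀ l, P l = ∏ h : Fin m,
      if Nat.testBit l.val h.val then p h else 1 - p h)
    (N : Fin (2 ^ m) → Matrix (Fin m) (Fin m) ℝ)
    (hN : ∀ l, N l = Matrix.diagonal fun h : Fin m =>
      if Nat.testBit l.val h.val then (1 : ℝ) else 0)
    (R : Matrix (Fin m) (Fin m) ℝ) (hR : R.PosDef) :
    (∑ l, P l • (N l * R * N l)).PosDef := by
  let full : Fin (2 ^ m) := ⟨2 ^ m - 1, Nat.sub_lt (Nat.two_pow_pos m) one_pos⟩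
  have hfull (h : Fin m) : Nat.testBit full.val h.val = true :=
    Nat.testBit_two_pow_sub_one_of_lt h.isLt
  refine PosDef.sum_of_posSemidef (Finset.mem_univ full) ?_ fun l _ => ?_
  · have hNfull : N full = 1 := by simp only [hN, hfull, if_true, diagonal_one]
    have hPfull : 0 < P full := by
      simpa only [hP, hfull, if_true] using Finset.prod_pos fun h _ => hp0 h
    simpa only [hNfull, Matrix.one_mul, Matrix.mul_one] using hR.smul hPfull
  · rw [hN, hP]
    exact (hR.posSemidef.diagonal_mul_mul_diagonal_same (star_trivial _)).smul
      (prod_ite_sub_nonneg (fun h => (hp0 h).le) hp1 _)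
end

section
/- Under the one-step value recursion above, if X_{k+1}(l) ≤ X'_{k+1}(l) in the Loewner order for all l (with both recursions well defined, i.e., the concavity conditions γ²I − Dᵀ(Σ_l P(l) X_{k+1}(l))D > 0 and γ²I − Dᵀ(Σ_l P(l) X'_{k+1}(l))D > 0 hold), then the resulting value matrices satisfy Ξ_k ≤ Ξ'_k (monotonicity of the minimax Riccati operator). -/
/-!
The stage cost is affine in the matrices `X l` through the terms `P l * (v ⬝ᵥ X l *ᵥ v)`, each of
which can only grow when `X l` grows in the Loewner order, since `P l ≥ 0`. Hence the cost under
`X'` dominates the cost under `X` at every `(x, u, w)`, and taking `⨆ w` and then `⨅ u` preserves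
this inequality. The value forms `x ⬝ᵥ Ξ *ᵥ x` are therefore pointwise ordered, i.e. `Ξ ≤ Ξ'`.
-/

open Matrix

namespace Matrix

variable {ι : Type*} [Fintype ι]

theorem dotProduct_mulVec_le_of_posSemidef_sub {M M' : Matrix ι ι ℝ} (h : (M' - M).PosSemidef)
    (v : ι → ℝ) : v ⬝ᵥ M *ᵥ v ≤ v ⬝ᵥ M' *ᵥ v := by
  have := h.dotProduct_mulVec_nonneg v
  rwa [star_trivial, sub_mulVec, dotProduct_sub, sub_nonneg] at this

theorem posSemidef_sub_of_dotProduct_mulVec_le {M M' : Matrix ι ι ℝ} (hM : M.IsHermitian)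
    (hM' : M'.IsHermitian) (h : ∀ v : ι → ℝ, v ⬝ᵥ M *ᵥ v ≤ v ⬝ᵥ M' *ᵥ v) :
    (M' - M).PosSemidef := by
  refine .of_dotProduct_mulVec_nonneg (hM'.sub hM) fun v => ?_
  rw [star_trivial, sub_mulVec, dotProduct_sub, sub_nonneg]
  exact h v

theorem sum_mul_dotProduct_mulVec_le {κ : Type*} [Fintype κ] {P : κ → ℝ} (hP : ∀ l, 0 ≤ P l)
    {M M' : κ → Matrix ι ι ℝ} (h : ∀ l, (M' l - M l).PosSemidef) (v : κ → ι → ℝ) :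
    ∑ l, P l * (v l ⬝ᵥ M l *ᵥ v l) ≤ ∑ l, P l * (v l ⬝ᵥ M' l *ᵥ v l) :=
  Finset.sum_le_sum fun l _ =>
    mul_le_mul_of_nonneg_left (dotProduct_mulVec_le_of_posSemidef_sub (h l) (v l)) (hP l)

end Matrix

theorem ciInf_ciSup_mono {α : Type*} {ι κ : Sort*} [ConditionallyCompleteLattice α]
    {f g : ι → κ → α} (hf : BddBelow (Set.range fun i => ⨆ j, f i j))
    (hg : ∀ i, BddAbove (Set.range (g i))) (h : ∀ i j, f i j ≤ g i j) :
    ⨅ i, ⨆ j, f i j ≤ ⨅ i, ⨆ j, g i j :=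
  ciInf_mono hf fun i => ciSup_mono (hg i) (h i)

theorem riccati_monotone_general {n m s L : ℕ}
    (W : Matrix (Fin n) (Fin n) ℝ) (γ : ℝ)
    (A : Matrix (Fin n) (Fin n) ℝ) (B : Matrix (Fin n) (Fin m) ℝ)
    (D : Matrix (Fin n) (Fin s) ℝ)
    (N : Fin L → Matrix (Fin m) (Fin m) ℝ)
    (Q : Matrix (Fin m) (Fin m) ℝ)
    (P : Fin L → ℝ) (hPnn : ∀ l, 0 ≤ P l)
    (X X' : Fin L → Matrix (Fin n) (Fin n) ℝ)
    (hle : ∀ l, (X' l - X l).PosSemidef)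
    (Ξ Ξ' : Matrix (Fin n) (Fin n) ℝ)
    (hΞ : Ξ.IsHermitian) (hΞ' : Ξ'.IsHermitian)
    (hV : ∀ x : Fin n → ℝ, x ⬝ᵥ Ξ.mulVec x =
      ⨅ u : Fin m → ℝ, ⨆ w : Fin s → ℝ,
        x ⬝ᵥ W.mulVec x + u ⬝ᵥ Q.mulVec u - γ ^ 2 * (w ⬝ᵥ w) +
          ∑ l, P l *
            ((A.mulVec x + B.mulVec ((N l).mulVec u) + D.mulVec w) ⬝ᵥ
              (X l).mulVec (A.mulVec x + B.mulVec ((N l).mulVec u) + D.mulVec w)))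
    (hV' : ∀ x : Fin n → ℝ, x ⬝ᵥ Ξ'.mulVec x =
      ⨅ u : Fin m → ℝ, ⨆ w : Fin s → ℝ,
        x ⬝ᵥ W.mulVec x + u ⬝ᵥ Q.mulVec u - γ ^ 2 * (w ⬝ᵥ w) +
          ∑ l, P l *
            ((A.mulVec x + B.mulVec ((N l).mulVec u) + D.mulVec w) ⬝ᵥ
              (X' l).mulVec (A.mulVec x + B.mulVec ((N l).mulVec u) + D.mulVec w)))
    (hbdd : ∀ x : Fin n → ℝ, BddBelow (Set.range fun u : Fin m → ℝ =>
      ⨆ w : Fin s → ℝ,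
        x ⬝ᵥ W.mulVec x + u ⬝ᵥ Q.mulVec u - γ ^ 2 * (w ⬝ᵥ w) +
          ∑ l, P l *
            ((A.mulVec x + B.mulVec ((N l).mulVec u) + D.mulVec w) ⬝ᵥ
              (X l).mulVec (A.mulVec x + B.mulVec ((N l).mulVec u) + D.mulVec w))))
    (hbdd' : ∀ (x : Fin n → ℝ) (u : Fin m → ℝ), BddAbove (Set.range fun w : Fin s → ℝ =>
        x ⬝ᵥ W.mulVec x + u ⬝ᵥ Q.mulVec u - γ ^ 2 * (w ⬝ᵥ w) +
          ∑ l, P l *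
            ((A.mulVec x + B.mulVec ((N l).mulVec u) + D.mulVec w) ⬝ᵥ
              (X' l).mulVec (A.mulVec x + B.mulVec ((N l).mulVec u) + D.mulVec w)))) :
    (Ξ' - Ξ).PosSemidef := by
  refine posSemidef_sub_of_dotProduct_mulVec_le hΞ hΞ' fun x => ?_
  rw [hV x, hV' x]
  refine ciInf_ciSup_mono (hbdd x) (hbdd' x) fun u w => ?_
  gcongr _ + ?_
  exact sum_mul_dotProduct_mulVec_le hPnn hle _

/-- Monotonicity of the minimax Riccati operator with respect to the Loewner order. -/
theorem riccati_monotone {n m s L : ℕ}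
    (W : Matrix (Fin n) (Fin n) ℝ) (γ : ℝ)
    (A : Matrix (Fin n) (Fin n) ℝ) (B : Matrix (Fin n) (Fin m) ℝ)
    (D : Matrix (Fin n) (Fin s) ℝ)
    (N : Fin L → Matrix (Fin m) (Fin m) ℝ)
    (Q : Matrix (Fin m) (Fin m) ℝ)
    (P : Fin L → ℝ) (hPnn : ∀ l, 0 ≤ P l) (hPsum : ∑ l, P l = 1)
    (X X' : Fin L → Matrix (Fin n) (Fin n) ℝ)
    (hW : W.PosSemidef) (hQ : Q.PosDef)
    (hX : ∀ l, (X l).PosSemidef) (hX' : ∀ l, (X' l).PosSemidef)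
    (hle : ∀ l, (X' l - X l).PosSemidef)
    (hconc : ((γ ^ 2 : ℝ) • (1 : Matrix (Fin s) (Fin s) ℝ) -
      Dᵀ * (∑ l, P l • X l) * D).PosDef)
    (hconc' : ((γ ^ 2 : ℝ) • (1 : Matrix (Fin s) (Fin s) ℝ) -
      Dᵀ * (∑ l, P l • X' l) * D).PosDef)
    (Ξ Ξ' : Matrix (Fin n) (Fin n) ℝ)
    (hΞ : Ξ.IsHermitian) (hΞ' : Ξ'.IsHermitian)
    (hV : ∀ x : Fin n → ℝ, x ⬝ᵥ Ξ.mulVec x =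
      ⨅ u : Fin m → ℝ, ⨆ w : Fin s → ℝ,
        x ⬝ᵥ W.mulVec x + u ⬝ᵥ Q.mulVec u - γ ^ 2 * (w ⬝ᵥ w) +
          ∑ l, P l *
            ((A.mulVec x + B.mulVec ((N l).mulVec u) + D.mulVec w) ⬝ᵥ
              (X l).mulVec (A.mulVec x + B.mulVec ((N l).mulVec u) + D.mulVec w)))
    (hV' : ∀ x : Fin n → ℝ, x ⬝ᵥ Ξ'.mulVec x =
      ⨅ u : Fin m → ℝ, ⨆ w : Fin s → ℝ,
        x ⬝ᵥ W.mulVec x + u ⬝ᵥ Q.mulVec u - γ ^ 2 * (w ⬝ᵥ w) +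
          ∑ l, P l *
            ((A.mulVec x + B.mulVec ((N l).mulVec u) + D.mulVec w) ⬝ᵥ
              (X' l).mulVec (A.mulVec x + B.mulVec ((N l).mulVec u) + D.mulVec w)))
    (hbdd : ∀ x : Fin n → ℝ, BddBelow (Set.range fun u : Fin m → ℝ =>
      ⨆ w : Fin s → ℝ,
        x ⬝ᵥ W.mulVec x + u ⬝ᵥ Q.mulVec u - γ ^ 2 * (w ⬝ᵥ w) +
          ∑ l, P l *
            ((A.mulVec x + B.mulVec ((N l).mulVec u) + D.mulVec w) ⬝ᵥ
              (X l).mulVec (A.mulVec x + B.mulVec ((N l).mulVec u) + D.mulVec w))))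
    (hbdd' : ∀ (x : Fin n → ℝ) (u : Fin m → ℝ), BddAbove (Set.range fun w : Fin s → ℝ =>
        x ⬝ᵥ W.mulVec x + u ⬝ᵥ Q.mulVec u - γ ^ 2 * (w ⬝ᵥ w) +
          ∑ l, P l *
            ((A.mulVec x + B.mulVec ((N l).mulVec u) + D.mulVec w) ⬝ᵥ
              (X' l).mulVec (A.mulVec x + B.mulVec ((N l).mulVec u) + D.mulVec w)))) :
    (Ξ' - Ξ).PosSemidef :=
  riccati_monotone_general W γ A B D N Q P hPnn X X' hle Ξ Ξ' hΞ hΞ' hV hV' hbdd hbdd'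
end
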